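/- For every permutation λ ∈ S_n, zeil(λ) = min(rmax(λ), tl(s(λ))), where zeil(λ) is the largest m such that n, n-1, ..., n-m+1 appear in decreasing order (of position) in λ, rmax(λ) is the number of right-to-left maxima of λ, and tl(μ) is the largest k such that the last k entries of μ are n-k+1, n-k+2, ..., n in that order. -/

import Mathlib

/-- `l` is a permutation of `{1, …, n}`, written as a word. -/
def IsPermList (n : ℕ) (l : List ℕ) : Prop := l.Perm (List.range' 1 n)

/-- The word obtained from `l` by exchanging the positions of the entries `i` and `i+1`. -/
def swapEntries (i : ℕ) (l : List ℕ) : List ℕ :=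
  l.map fun x => if x = i then i + 1 else if x = i + 1 then i else x

/-- Some entry larger than `i+1` appears (strictly) between the entries `i` and `i+1`
in the word `l`. -/
def ToggleApplies (i : ℕ) (l : List ℕ) : Prop :=
  ∃ a ∈ l, i + 1 < a ∧
    min (l.idxOf i) (l.idxOf (i + 1)) < l.idxOf a ∧
    l.idxOf a < max (l.idxOf i) (l.idxOf (i + 1))

open scoped Classical in
/-- The polyurethane toggle `p i`. -/
noncomputable def toggle (i : ℕ) (l : List ℕ) : List ℕ :=
  if ToggleApplies i l then swapEntries i l else l

lemma max_getD_mem (l : List ℕ) (h : l ≠ []) : l.max?.getD 0 ∈ l := by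
  rcases hm : l.max? with _ | m'
  · exact absurd (List.max?_eq_none_iff.mp hm) h
  · simpa using List.max?_mem hm

lemma length_takeWhile_lt (p : ℕ → Bool) (l : List ℕ) (x : ℕ) (hx : x ∈ l) (hpx : p x = false) :
    (l.takeWhile p).length < l.length := by
  rcases Nat.lt_or_ge (l.takeWhile p).length l.length with h | h
  · exact h
  · have := List.takeWhile_eq_self_iff.mp ((List.takeWhile_sublist p).eq_of_length_le h) x hx
    rw [hpx] at this; exact absurd this (by simp)

lemma length_dropWhile_tail_lt (p : ℕ → Bool) (l : List ℕ) (h : l ≠ []) :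
    ((l.dropWhile p).tail).length < l.length := by
  have h1 : (l.dropWhile p).length ≤ l.length := (List.dropWhile_sublist _).length_le
  have h2 : ((l.dropWhile p).tail).length ≤ (l.dropWhile p).length - 1 := by
    simp [List.length_tail]
  have : 0 < l.length := List.length_pos_iff.mpr h
  omega

/-- West's stack-sorting map `s`: `s([]) = []` and `s(LmR) = s(L) s(R) m`,
where `m` is the largest entry. -/
def stackSort : List ℕ → List ℕ
  | [] => []
  | a :: rest =>
    stackSort ((a :: rest).takeWhile (· ≠ (a :: rest).max?.getD 0)) ++
      stackSort (((a :: rest).dropWhile (· ≠ (a :: rest).max?.getD 0)).tail) ++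
      [(a :: rest).max?.getD 0]
termination_by l => l.length
decreasing_by
  · exact length_takeWhile_lt _ _ _ (max_getD_mem (a :: rest) (by simp)) (by simp)
  · exact length_dropWhile_tail_lt _ _ (by simp)

open scoped Classical in
/-- The Zeilberger statistic: the largest `m` such that the entries `n, n-1, …, n-m+1`
appear in decreasing order (of position) in `l`. -/
noncomputable def zeil (n : ℕ) (l : List ℕ) : ℕ :=
  Nat.findGreatest
    (fun m => ∀ j, 1 ≤ j → j < m → l.idxOf (n - j + 1) < l.idxOf (n - j)) n

open scoped Classical in
/-- The number of right-to-left maxima of `l`. -/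
noncomputable def rmax (l : List ℕ) : ℕ :=
  ((Finset.range l.length).filter
    fun k => ∀ k', k < k' → k' < l.length → l.getD k' 0 < l.getD k 0).card

open scoped Classical in
/-- The tail length of a permutation of `{1, …, n}`: the largest `k` such that the last
`k` entries are `n-k+1, n-k+2, …, n` in this order. -/
noncomputable def tl (n : ℕ) (l : List ℕ) : ℕ :=
  Nat.findGreatest
    (fun k => ∀ j, 1 ≤ j → j ≤ k → l.getD (n - k + j - 1) 0 = n - k + j) n

/-! Write `λ = L n R` with `n` the largest entry, so that `s(λ) = s(L) s(R) n`. Passing from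
`(λ, n)` to `(R, n - 1)` lowers each statistic by exactly one: the run `n, n - 1, …` continues
inside `R`, the right-to-left maxima of `λ` are `n` and those of `R`, and the tail of `s(λ)` is `n`
preceded by the tail of `s(L) s(R)`. Allowing an arbitrary starting value `u ≥ max λ` (both `zeil`
and `tl` vanish when `u ∉ λ`) turns this into an induction along the recursion of `s`. The tail of
`s(L) s(R)` can differ from that of `s(R)` only by running through all of `s(R)`, i.e. by
exceeding `|R| ≥ rmax(R)`, where the minimum no longer sees it. -/

namespace IsPermList

variable {n : ℕ} {l : List ℕ}

theorem nodup (hl : IsPermList n l) : l.Nodup := hl.nodup_iff.2 List.nodup_range'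

theorem length_eq (hl : IsPermList n l) : l.length = n := by
  simpa using List.Perm.length_eq hl

theorem mem_iff (hl : IsPermList n l) {x : ℕ} : x ∈ l ↔ 1 ≤ x ∧ x ≤ n := by
  rw [List.Perm.mem_iff hl, List.mem_range'_1]; omega

end IsPermList

namespace List

theorem takeWhile_append_cons_tail_dropWhile {α : Type*} [DecidableEq α] {x : α} {l : List α}
    (hx : x ∈ l) :
    l.takeWhile (· ≠ x) ++ x :: (l.dropWhile (· ≠ x)).tail = l := by
  induction l with
  | nil => simp at hx
  | cons a t ih =>
    by_cases hax : a = x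
    · simp [hax]
    · have hxt : x ∈ t := by simpa [Ne.symm hax] using hx
      rw [takeWhile_cons_of_pos (by simpa using hax), dropWhile_cons_of_pos (by simpa using hax),
        cons_append, ih hxt]

theorem sublist_iff_isChain_idxOf {α : Type*} [BEq α] [LawfulBEq α] {s l : List α} (hl : l.Nodup)
    (hs : s ⊆ l) :
    s <+ l ↔ s.IsChain (fun a b => l.idxOf a < l.idxOf b) := by
  let r : α → α → Prop := fun a b => l.idxOf a < l.idxOf b
  have : Trans r r r := ⟨lt_trans⟩
  have : Std.Irrefl r := ⟨fun a => lt_irrefl _⟩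
  have : Std.Antisymm r := ⟨fun _ _ hab hba => absurd hab (lt_asymm hba)⟩
  have hlr : l.Pairwise r := pairwise_iff_getElem.2 fun i j hi hj hij => by
    simpa only [r, hl.idxOf_getElem] using hij
  refine ⟨fun h => (hlr.sublist h).isChain, fun h => ?_⟩
  have hsr : s.Pairwise r := h.pairwise
  exact sublist_of_subperm_of_pairwise (subperm_of_subset hsr.nodup hs) hsr hlr

end List

theorem stackSort_perm (l : List ℕ) : (stackSort l).Perm l := by
  induction l using stackSort.induct with
  | case1 => simp [stackSort]
  | case2 a rest ihL ihR =>
    rw [stackSort]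
    set v := (a :: rest).max?.getD 0
    have hsplit :=
      List.takeWhile_append_cons_tail_dropWhile (max_getD_mem _ (List.cons_ne_nil a rest))
    refine ((ihL.append ihR).append (List.Perm.refl [v])).trans ?_
    conv_rhs => rw [← hsplit]
    rw [List.append_assoc]
    exact (List.perm_append_singleton _ _).append_left _

theorem rmax_le_length (l : List ℕ) : rmax l ≤ l.length := by
  classical
  exact (Finset.card_filter_le _ _).trans (Finset.card_range _).le

theorem rmax_cons (a : ℕ) (t : List ℕ) :
    rmax (a :: t) = rmax t + if ∀ b ∈ t, b < a then 1 else 0 := by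
  classical
  have head_iff : (∀ k, 0 < k → k < t.length + 1 → (a :: t).getD k 0 < (a :: t).getD 0 0) ↔
      ∀ b ∈ t, b < a := by
    refine ⟨fun h b hb => ?_, fun h k hk hkt => ?_⟩
    · obtain ⟨i, hi, rfl⟩ := List.mem_iff_getElem.1 hb
      simpa [hi] using h (i + 1) i.succ_pos (by omega)
    · obtain ⟨i, rfl⟩ := Nat.exists_eq_add_of_lt hk
      simpa [show i < t.length by omega] using h _ (List.getElem_mem (by omega))
  have succ_iff (i : ℕ) : (∀ k, i + 1 < k → k < t.length + 1 →
        (a :: t).getD k 0 < (a :: t).getD (i + 1) 0) ↔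
      ∀ k, i < k → k < t.length → t.getD k 0 < t.getD i 0 := by
    refine ⟨fun h k hik hkt => by simpa using h (k + 1) (by omega) (by omega),
      fun h k hik hkt => ?_⟩
    obtain ⟨j, rfl⟩ := Nat.exists_eq_add_of_lt (show 0 < k by omega)
    simpa using h j (by omega) (by omega)
  unfold rmax
  rw [List.length_cons, Finset.card_filter, Finset.sum_range_succ', Finset.card_filter]
  exact congrArg₂ (· + ·) (Finset.sum_congr rfl fun i _ => if_congr (succ_iff i) rfl rfl)
    (if_congr head_iff rfl rfl)

theorem rmax_append_cons {L R : List ℕ} {v : ℕ} (hL : ∀ x ∈ L, x < v) (hR : ∀ x ∈ R, x < v) :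
    rmax (L ++ v :: R) = rmax R + 1 := by
  induction L with
  | nil => rw [List.nil_append, rmax_cons, if_pos hR]
  | cons a L ih =>
    have hva : ¬ ∀ b ∈ L ++ v :: R, b < a := fun h => (hL a (by simp)).not_gt (h v (by simp))
    rw [List.cons_append, rmax_cons, if_neg hva, ih fun x hx => hL x (by simp [hx]), add_zero]

def countdown (v k : ℕ) : List ℕ := (List.range k).map (v - ·)

/-- `zeil` with starting value `v`, for any word: `v, v - 1, …` matched greedily as a
subsequence. -/
def subseqCountdown : ℕ → List ℕ → ℕ
  | _, [] => 0
  | v, a :: t => if a = v then subseqCountdown (v - 1) t + 1 else subseqCountdown v t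

/-- `tl` with starting value `u`, read on the reversed word. -/
def prefixCountdown : ℕ → List ℕ → ℕ
  | _, [] => 0
  | u, a :: t => if a = u then prefixCountdown (u - 1) t + 1 else 0

section Countdown

variable {u v k : ℕ}

@[simp] theorem length_countdown : (countdown v k).length = k := by simp [countdown]

@[simp] theorem getElem_countdown {i : ℕ} (hi : i < (countdown v k).length) :
    (countdown v k)[i] = v - i := by
  simp [countdown]

theorem countdown_succ : countdown v (k + 1) = v :: countdown (v - 1) k := by
  simp [countdown, List.range_succ_eq_map, Nat.sub_sub, Nat.add_comm 1]

theorem le_subseqCountdown_iff {l : List ℕ} :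
    k ≤ subseqCountdown v l ↔ (countdown v k).Sublist l := by
  induction l generalizing v k with
  | nil => cases k <;> simp [subseqCountdown, countdown]
  | cons a t ih =>
    cases k with
    | zero => simp [countdown]
    | succ k =>
      by_cases hav : a = v
      · subst hav
        simp [subseqCountdown, countdown_succ, ih]
      · rw [subseqCountdown, if_neg hav, ih, countdown_succ, List.sublist_cons_iff]
        simp [Ne.symm hav]

theorem le_prefixCountdown_iff {r : List ℕ} : k ≤ prefixCountdown u r ↔ countdown u k <+: r := by
  induction r generalizing u k with
  | nil => cases k <;> simp [prefixCountdown, countdown]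
  | cons a t ih =>
    cases k with
    | zero => simp [countdown]
    | succ k =>
      by_cases hau : a = u
      · simp [prefixCountdown, hau, countdown_succ, ih]
      · simp [prefixCountdown, hau, countdown_succ, Ne.symm hau]

theorem subseqCountdown_le_length (l : List ℕ) : subseqCountdown v l ≤ l.length := by
  simpa using (le_subseqCountdown_iff.1 le_rfl).length_le

theorem prefixCountdown_le_length (r : List ℕ) : prefixCountdown u r ≤ r.length := by
  simpa using (le_prefixCountdown_iff.1 le_rfl).length_le

theorem subseqCountdown_eq_zero {l : List ℕ} (h : v ∉ l) : subseqCountdown v l = 0 := by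
  by_contra hne
  exact h (by simpa [countdown] using le_subseqCountdown_iff.1 (Nat.one_le_iff_ne_zero.2 hne))

theorem subseqCountdown_append_cons {L : List ℕ} (h : v ∉ L) (R : List ℕ) :
    subseqCountdown v (L ++ v :: R) = subseqCountdown (v - 1) R + 1 := by
  induction L with
  | nil => simp [subseqCountdown]
  | cons a L ih =>
    rw [List.mem_cons, not_or] at h
    simp [subseqCountdown, Ne.symm h.1, ih h.2]

theorem min_prefixCountdown_append {c : ℕ} {r₁ : List ℕ} (h : c ≤ r₁.length) (r₂ : List ℕ) :
    min c (prefixCountdown u (r₁ ++ r₂)) = min c (prefixCountdown u r₁) := by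
  induction r₁ generalizing u c with
  | nil => simp_all
  | cons a t ih =>
    by_cases hau : a = u
    · obtain _ | c := c
      · simp
      · simp only [prefixCountdown, hau, if_true, List.cons_append]
        rw [Nat.add_min_add_right, Nat.add_min_add_right, ih (Nat.le_of_succ_le_succ h)]
    · simp [prefixCountdown, hau]

end Countdown

theorem subseqCountdown_eq_min_rmax_prefixCountdown {u : ℕ} {l : List ℕ} (hnd : l.Nodup)
    (hu : ∀ x ∈ l, x ≤ u) :
    subseqCountdown u l = min (rmax l) (prefixCountdown u (stackSort l).reverse) := by
  induction l using stackSort.induct generalizing u with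
  | case1 => simp [subseqCountdown, rmax]
  | case2 a rest _ ihR =>
    set v := (a :: rest).max?.getD 0
    set L := (a :: rest).takeWhile (· ≠ v)
    set R := ((a :: rest).dropWhile (· ≠ v)).tail
    have hsplit : L ++ v :: R = a :: rest :=
      List.takeWhile_append_cons_tail_dropWhile (max_getD_mem _ (List.cons_ne_nil a rest))
    have hvL : v ∉ L := fun h => by simpa using List.mem_takeWhile_imp h
    have hndLR : (L ++ v :: R).Nodup := hsplit ▸ hnd
    have hvR : v ∉ R := (List.nodup_cons.1 (List.nodup_append.1 hndLR).2.1).1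
    have hL : ∀ x ∈ L, x < v := fun x hx => lt_of_le_of_ne
      (List.le_max?_getD_of_mem (hsplit ▸ List.mem_append_left _ hx)) (ne_of_mem_of_not_mem hx hvL)
    have hR : ∀ x ∈ R, x < v := fun x hx => lt_of_le_of_ne
      (List.le_max?_getD_of_mem (hsplit ▸ by simp [hx])) (ne_of_mem_of_not_mem hx hvR)
    have hs : (stackSort (a :: rest)).reverse =
        v :: ((stackSort R).reverse ++ (stackSort L).reverse) := by
      rw [stackSort]; simp [L, R, v]
    rw [hs, ← hsplit, rmax_append_cons hL hR]
    rcases (hu v (max_getD_mem _ (List.cons_ne_nil a rest))).lt_or_eq with hvu | rfl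
    · have hul : u ∉ L ++ v :: R := fun h => (List.le_max?_getD_of_mem (hsplit ▸ h)).not_gt hvu
      simp [subseqCountdown_eq_zero hul, prefixCountdown, hvu.ne]
    · have hRlen : rmax R ≤ (stackSort R).reverse.length := by
        simpa [(stackSort_perm R).length_eq] using rmax_le_length R
      rw [subseqCountdown_append_cons hvL, prefixCountdown, if_pos rfl, Nat.add_min_add_right,
        min_prefixCountdown_append hRlen, ihR (List.nodup_append.1 hndLR).2.1.of_cons
          fun x hx => Nat.le_sub_one_of_lt (hR x hx)]

-- The instance is implicit so that the lemma applies to the classical instances of `zeil` and `tl`.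
theorem Nat.findGreatest_eq_of_forall_iff_le {P : ℕ → Prop} {_ : DecidablePred P} {n c : ℕ}
    (hc : c ≤ n) (h : ∀ k ≤ n, P k ↔ k ≤ c) : Nat.findGreatest P n = c :=
  Nat.findGreatest_eq_iff.2
    ⟨hc, fun _ => (h c hc).2 le_rfl, fun _ hck hkn hk => (hck.trans_le ((h _ hkn).1 hk)).false⟩

theorem tl_eq_prefixCountdown {n : ℕ} {μ : List ℕ} (hμ : μ.length = n) :
    tl n μ = prefixCountdown n μ.reverse := by
  unfold tl
  refine Nat.findGreatest_eq_of_forall_iff_le ?_ fun k hkn => ?_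
  · simpa [hμ] using prefixCountdown_le_length (u := n) μ.reverse
  rw [le_prefixCountdown_iff, List.prefix_iff_getElem]
  simp only [length_countdown, List.length_reverse, hμ, hkn, exists_true_left, getElem_countdown,
    List.getElem_reverse]
  -- the entry in position `n - k + j - 1` is the `(k - j)`-th from the right
  refine ⟨fun h i hi => ?_, fun h j hj hjk => ?_⟩
  · have := h (k - i) (by omega) (by omega)
    rwa [show n - k + (k - i) - 1 = n - 1 - i by omega, show n - k + (k - i) = n - i by omega,
      List.getD_eq_getElem _ _ (by omega), eq_comm] at this
  · rw [show n - k + j - 1 = n - 1 - (k - j) by omega, show n - k + j = n - (k - j) by omega,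
      List.getD_eq_getElem _ _ (by omega), h (k - j) (by omega)]

theorem zeil_eq_subseqCountdown {n : ℕ} {l : List ℕ} (hl : IsPermList n l) :
    zeil n l = subseqCountdown n l := by
  unfold zeil
  refine Nat.findGreatest_eq_of_forall_iff_le ?_ fun k hkn => ?_
  · simpa [hl.length_eq] using subseqCountdown_le_length (v := n) l
  have hsub : countdown n k ⊆ l := fun x hx => by
    obtain ⟨i, hi, rfl⟩ := List.mem_map.1 hx
    exact hl.mem_iff.2 ⟨by simp at hi; omega, by omega⟩
  rw [le_subseqCountdown_iff, List.sublist_iff_isChain_idxOf hl.nodup hsub,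
    List.isChain_iff_getElem]
  simp only [length_countdown, getElem_countdown]
  refine ⟨fun h i hi => ?_, fun h j hj hjk => ?_⟩
  · simpa [show n - (i + 1) + 1 = n - i by omega] using h (i + 1) (by omega) hi
  · simpa [show n - (j - 1) = n - j + 1 by omega, show j - 1 + 1 = j by omega]
      using h (j - 1) (by omega)

/-- `zeil(λ) = min(rmax(λ), tl(s(λ)))` for every `λ ∈ Sₙ`. -/
theorem zeil_eq_min_rmax_tl (n : ℕ) (l : List ℕ) (hl : IsPermList n l) :
    zeil n l = min (rmax l) (tl n (stackSort l)) := by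
  rw [zeil_eq_subseqCountdown hl,
    tl_eq_prefixCountdown ((stackSort_perm l).length_eq.trans hl.length_eq),
    subseqCountdown_eq_min_rmax_prefixCountdown hl.nodup fun x hx => (hl.mem_iff.1 hx).2]
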